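/- Let a, σ > 0 and b ≥ 0, define k(x) := √(a² + 2(1+b·x)·σ²) for x ≥ 0, and set x* := (b − a + √((b−a)² + 2σ²))/σ². Then for every x ≥ 0: max(x, (k(x)−a)/σ²) = (k(x)−a)/σ² if x ≤ x*, and max(x, (k(x)−a)/σ²) = x if x ≥ x*. Consequently, for any w̄₀ ≥ 0, the sequence defined by w̄ⱼ₊₁ := max(w̄ⱼ, (k(w̄ⱼ)−a)/σ²) is nondecreasing, bounded above by max(w̄₀, x*), and therefore converges to a finite limit. -/

import Mathlib

/-!
With `f x := (k(x) - a) / σ²` (`wbarStep`), the identity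
`k(x)² - (σ²x + a)² = σ⁴ (x* - x) (x - x₋)`, where `x₋ < 0 < x*` are the roots of
`σ²x² + 2(a - b)x - 2`, shows that for `x ≥ 0` the difference `f x - x` is a positive multiple
of `x* - x`. Since `f` is monotone with fixed point `x*`, it maps `[0, x*]` into itself and
moves points beyond `x*` down, so `x ↦ max x (f x)` never leaves `[0, max w̄₀ x*]`; the
iterates increase and converge.
-/

/-- k(x) := √(a² + 2(1+b·x)·σ²). -/
noncomputable def kfun (a b σ x : ℝ) : ℝ := Real.sqrt (a ^ 2 + 2 * (1 + b * x) * σ ^ 2)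

open Set

section MaxIteration

variable {α : Type*} [LinearOrder α] {g : α → α} {w : ℕ → α}

theorem monotone_of_succ_eq_max (hrec : ∀ j, w (j + 1) = max (w j) (g (w j))) : Monotone w :=
  monotone_nat_of_le_succ fun j => (hrec j).symm ▸ le_max_left _ _

theorem le_max_of_succ_eq_max {lo c : α} (hrec : ∀ j, w (j + 1) = max (w j) (g (w j)))
    (hlo : lo ≤ w 0) (hg : ∀ x, lo ≤ x → g x ≤ max x c) (j : ℕ) : w j ≤ max (w 0) c := by
  induction j with
  | zero => exact le_max_left _ _
  | succ j ih =>
    have hw : lo ≤ w j := hlo.trans (monotone_of_succ_eq_max hrec j.zero_le)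
    rw [hrec j]
    exact max_le ih ((hg _ hw).trans (max_le ih (le_max_right _ _)))

end MaxIteration

theorem abs_lt_sqrt_sq_add {t ε : ℝ} (hε : 0 < ε) : |t| < √(t ^ 2 + ε) :=
  (Real.lt_sqrt (abs_nonneg t)).2 (by rw [sq_abs]; linarith)

noncomputable def xStar (a b σ : ℝ) : ℝ := (b - a + √((b - a) ^ 2 + 2 * σ ^ 2)) / σ ^ 2

noncomputable def wbarStep (a b σ x : ℝ) : ℝ := (kfun a b σ x - a) / σ ^ 2

section WbarStep

variable {a b σ x : ℝ}

theorem wbarStep_monotone (hb : 0 ≤ b) : Monotone (wbarStep a b σ) := fun x y hxy => by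
  unfold wbarStep kfun
  gcongr

theorem wbarStep_sub_self (hσ : 0 < σ) (hb : 0 ≤ b) (hx : 0 ≤ x) :
    ∃ c > 0, wbarStep a b σ x - x = c * (xStar a b σ - x) := by
  unfold wbarStep xStar
  set s := √((b - a) ^ 2 + 2 * σ ^ 2)
  set k := kfun a b σ x
  have hσ2 : 0 < σ ^ 2 := by positivity
  have hs2 : s ^ 2 = (b - a) ^ 2 + 2 * σ ^ 2 := Real.sq_sqrt (by positivity)
  have hk2 : k ^ 2 = a ^ 2 + 2 * (1 + b * x) * σ ^ 2 := Real.sq_sqrt (by positivity)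
  have hs : |b - a| < s := abs_lt_sqrt_sq_add (by positivity)
  have hk : |a| < k := abs_lt_sqrt_sq_add (by positivity)
  -- `c = σ² (x - x₋) / (k + σ²x + a)`
  have hD : 0 < σ ^ 2 * x + s + a - b := by
    linarith [le_abs_self (b - a), mul_nonneg hσ2.le hx]
  have hE : 0 < k + σ ^ 2 * x + a := by
    linarith [neg_le_abs a, mul_nonneg hσ2.le hx]
  refine ⟨(σ ^ 2 * x + s + a - b) / (k + σ ^ 2 * x + a), div_pos hD hE, ?_⟩
  field_simp
  linear_combination hk2 - hs2

theorem self_le_wbarStep_iff (hσ : 0 < σ) (hb : 0 ≤ b) (hx : 0 ≤ x) :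
    x ≤ wbarStep a b σ x ↔ x ≤ xStar a b σ := by
  obtain ⟨c, hc, h⟩ := wbarStep_sub_self hσ hb hx
  rw [← sub_nonneg, h, mul_nonneg_iff_of_pos_left hc, sub_nonneg]

theorem wbarStep_le_self_iff (hσ : 0 < σ) (hb : 0 ≤ b) (hx : 0 ≤ x) :
    wbarStep a b σ x ≤ x ↔ xStar a b σ ≤ x := by
  obtain ⟨c, hc, h⟩ := wbarStep_sub_self hσ hb hx
  rw [← sub_nonpos, h, ← mul_zero c, mul_le_mul_iff_right₀ hc, sub_nonpos]

theorem xStar_pos (hσ : 0 < σ) : 0 < xStar a b σ := by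
  have hs : |b - a| < √((b - a) ^ 2 + 2 * σ ^ 2) := abs_lt_sqrt_sq_add (by positivity)
  exact div_pos (by linarith [neg_abs_le (b - a)]) (by positivity)

theorem wbarStep_xStar (hσ : 0 < σ) (hb : 0 ≤ b) : wbarStep a b σ (xStar a b σ) = xStar a b σ :=
  le_antisymm ((wbarStep_le_self_iff hσ hb (xStar_pos hσ).le).2 le_rfl)
    ((self_le_wbarStep_iff hσ hb (xStar_pos hσ).le).2 le_rfl)

theorem wbarStep_le_max (hσ : 0 < σ) (hb : 0 ≤ b) (hx : 0 ≤ x) :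
    wbarStep a b σ x ≤ max x (xStar a b σ) := by
  rcases le_total x (xStar a b σ) with hle | hge
  · calc wbarStep a b σ x ≤ wbarStep a b σ (xStar a b σ) := wbarStep_monotone hb hle
      _ = xStar a b σ := wbarStep_xStar hσ hb
      _ ≤ max x (xStar a b σ) := le_max_right _ _
  · exact ((wbarStep_le_self_iff hσ hb hx).2 hge).trans (le_max_left _ _)

end WbarStep

theorem wbar_sequence_converges
    (a b σ : ℝ) (hσ : 0 < σ) (hb : 0 ≤ b)
    (wbar : ℕ → ℝ) (h0 : 0 ≤ wbar 0)
    (hrec : ∀ j : ℕ, wbar (j + 1) = max (wbar j) ((kfun a b σ (wbar j) - a) / σ ^ 2)) :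
    (∀ x ≥ (0 : ℝ),
      (x ≤ (b - a + Real.sqrt ((b - a) ^ 2 + 2 * σ ^ 2)) / σ ^ 2 →
        max x ((kfun a b σ x - a) / σ ^ 2) = (kfun a b σ x - a) / σ ^ 2) ∧
      ((b - a + Real.sqrt ((b - a) ^ 2 + 2 * σ ^ 2)) / σ ^ 2 ≤ x →
        max x ((kfun a b σ x - a) / σ ^ 2) = x)) ∧
    Monotone wbar ∧
    (∀ j : ℕ, wbar j ≤ max (wbar 0) ((b - a + Real.sqrt ((b - a) ^ 2 + 2 * σ ^ 2)) / σ ^ 2)) ∧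
    ∃ L : ℝ, Filter.Tendsto wbar Filter.atTop (nhds L) := by
  have hmono : Monotone wbar := monotone_of_succ_eq_max (g := wbarStep a b σ) hrec
  have hbdd : ∀ j, wbar j ≤ max (wbar 0) (xStar a b σ) :=
    le_max_of_succ_eq_max (g := wbarStep a b σ) hrec h0 fun x hx => wbarStep_le_max hσ hb hx
  refine ⟨fun x hx => ⟨fun hle => ?_, fun hge => ?_⟩, hmono, hbdd, ?_⟩
  · exact max_eq_right ((self_le_wbarStep_iff hσ hb hx).2 hle)
  · exact max_eq_left ((wbarStep_le_self_iff hσ hb hx).2 hge)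
  · exact ⟨_, tendsto_atTop_ciSup hmono ⟨_, forall_mem_range.2 hbdd⟩⟩
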